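/- Let C be a non-zero graded submodule of M. Then C is a graded strongly classical 2-absorbing second submodule of M if and only if for every r, s, t ∈ h(R) and every graded submodule N of M with r·s·t·C ⊆ N, either r·s·C ⊆ N or s·t·C ⊆ N or r·t·C ⊆ N. -/

import Mathlib

open Pointwise

section GradedDefs

variable {G : Type*} [Group G] [DecidableEq G] {R : Type*} [CommRing R]
  {M : Type*} [AddCommGroup M] [Module R M]

/-- `R` is a `G`-graded commutative ring via the additive subgroups `𝒜 α`:
`R_α R_β ⊆ R_{αβ}` and `R = ⊕_{α ∈ G} R_α`. -/
structure IsRingGrading (𝒜 : G → AddSubgroup R) : Prop where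
  one_mem : (1 : R) ∈ 𝒜 1
  mul_mem : ∀ ⦃α β : G⦄ ⦃r s : R⦄, r ∈ 𝒜 α → s ∈ 𝒜 β → r * s ∈ 𝒜 (α * β)
  isInternal : DirectSum.IsInternal 𝒜

/-- `M` is a graded module over the `G`-graded ring `R`:
`R_α M_β ⊆ M_{αβ}` and `M = ⊕_{α ∈ G} M_α`. -/
structure IsModuleGrading (𝒜 : G → AddSubgroup R) (ℳ : G → AddSubgroup M) : Prop where
  smul_mem : ∀ ⦃α β : G⦄ ⦃r : R⦄ ⦃m : M⦄, r ∈ 𝒜 α → m ∈ ℳ β → r • m ∈ ℳ (α * β)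
  isInternal : DirectSum.IsInternal ℳ

/-- A submodule `N` of `M` is a graded submodule iff `N = ⊕_{α ∈ G} (N ∩ M_α)`,
equivalently, every element of `N` is a sum of homogeneous elements of `N`. -/
def IsGradedSubmodule (ℳ : G → AddSubgroup M) (N : Submodule R M) : Prop :=
  ∀ n ∈ N, n ∈ Submodule.span R {m : M | m ∈ N ∧ ∃ α, m ∈ ℳ α}

/-- An ideal `I` of `R` is a graded ideal iff `I = ⊕_{α ∈ G} (I ∩ R_α)`. -/
def IsGradedIdeal (𝒜 : G → AddSubgroup R) (I : Ideal R) : Prop :=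
  ∀ r ∈ I, r ∈ Ideal.span {s : R | s ∈ I ∧ ∃ α, s ∈ 𝒜 α}

/-- A proper graded submodule `C` of `M` is completely graded irreducible if whenever
`C = ⋂_{λ ∈ Δ} C_λ` for a family of graded submodules `C_λ`, then `C = C_β` for some `β`. -/
def CompletelyGradedIrreducible (ℳ : G → AddSubgroup M) (C : Submodule R M) : Prop :=
  IsGradedSubmodule ℳ C ∧ C ≠ ⊤ ∧
    ∀ S : Set (Submodule R M), (∀ D ∈ S, IsGradedSubmodule ℳ D) → C = sInf S → C ∈ S

/-- A non-zero graded submodule `C` of `M` is a graded classical 2-absorbing second submodule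
if whenever `r, s, t ∈ h(R)`, `U` is a completely graded irreducible submodule of `M` and
`r·s·t·C ⊆ U`, then `r·s·C ⊆ U` or `s·t·C ⊆ U` or `r·t·C ⊆ U`. -/
def IsGrClassical2AbsorbingSecond (𝒜 : G → AddSubgroup R) (ℳ : G → AddSubgroup M)
    (C : Submodule R M) : Prop :=
  C ≠ ⊥ ∧ IsGradedSubmodule ℳ C ∧
    ∀ r s t : R, (∃ α, r ∈ 𝒜 α) → (∃ β, s ∈ 𝒜 β) → (∃ γ, t ∈ 𝒜 γ) →
      ∀ U : Submodule R M, CompletelyGradedIrreducible ℳ U →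
        r • s • t • C ≤ U → (r • s • C ≤ U ∨ s • t • C ≤ U ∨ r • t • C ≤ U)

/-- A non-zero graded submodule `C` of `M` is a graded strongly classical 2-absorbing second
submodule if whenever `r, s, t ∈ h(R)`, `U₁, U₂, U₃` are completely graded irreducible
submodules of `M` and `r·s·t·C ⊆ U₁ ∩ U₂ ∩ U₃`, then `r·s·C ⊆ U₁ ∩ U₂ ∩ U₃` or
`s·t·C ⊆ U₁ ∩ U₂ ∩ U₃` or `r·t·C ⊆ U₁ ∩ U₂ ∩ U₃`. -/
def IsGrStronglyClassical2AbsorbingSecond (𝒜 : G → AddSubgroup R) (ℳ : G → AddSubgroup M)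
    (C : Submodule R M) : Prop :=
  C ≠ ⊥ ∧ IsGradedSubmodule ℳ C ∧
    ∀ r s t : R, (∃ α, r ∈ 𝒜 α) → (∃ β, s ∈ 𝒜 β) → (∃ γ, t ∈ 𝒜 γ) →
      ∀ U₁ U₂ U₃ : Submodule R M, CompletelyGradedIrreducible ℳ U₁ →
        CompletelyGradedIrreducible ℳ U₂ → CompletelyGradedIrreducible ℳ U₃ →
        r • s • t • C ≤ U₁ ⊓ U₂ ⊓ U₃ →
        (r • s • C ≤ U₁ ⊓ U₂ ⊓ U₃ ∨ s • t • C ≤ U₁ ⊓ U₂ ⊓ U₃ ∨ r • t • C ≤ U₁ ⊓ U₂ ⊓ U₃)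

/-- A non-zero graded submodule `S` of `M` is a graded weakly second submodule if whenever
`r, s ∈ h(R)`, `N` is a graded submodule of `M` and `r·s·S ⊆ N`, then `r·S ⊆ N` or `s·S ⊆ N`. -/
def IsGrWeaklySecond (𝒜 : G → AddSubgroup R) (ℳ : G → AddSubgroup M)
    (S : Submodule R M) : Prop :=
  S ≠ ⊥ ∧ IsGradedSubmodule ℳ S ∧
    ∀ r s : R, (∃ α, r ∈ 𝒜 α) → (∃ β, s ∈ 𝒜 β) →
      ∀ N : Submodule R M, IsGradedSubmodule ℳ N →
        r • s • S ≤ N → (r • S ≤ N ∨ s • S ≤ N)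

/-- A proper graded ideal `I` of `R` is a graded 2-absorbing ideal if whenever `r, s, t ∈ h(R)`
with `r·s·t ∈ I`, then `r·s ∈ I` or `r·t ∈ I` or `s·t ∈ I`. -/
def IsGr2AbsorbingIdeal (𝒜 : G → AddSubgroup R) (I : Ideal R) : Prop :=
  I ≠ ⊤ ∧ IsGradedIdeal 𝒜 I ∧
    ∀ r s t : R, (∃ α, r ∈ 𝒜 α) → (∃ β, s ∈ 𝒜 β) → (∃ γ, t ∈ 𝒜 γ) →
      r * s * t ∈ I → (r * s ∈ I ∨ r * t ∈ I ∨ s * t ∈ I)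

end GradedDefs

/-!
A graded submodule `N` is the intersection of the completely graded irreducible submodules
containing it: by Zorn, a graded submodule maximal among those containing `N` and avoiding a
given element is completely graded irreducible. This gives the forward implication. For the
converse, apply the condition to `U₁ ∩ U₂ ∩ U₃`, which is graded because graded submodules are
exactly the submodules closed under taking homogeneous components.
-/

section Homogeneous

open DirectSum

variable {ι R M : Type*} [DecidableEq ι] [CommRing R] [AddCommGroup M] [Module R M]
  {𝒜 : ι → AddSubgroup R} {ℳ : ι → AddSubgroup M} [Decomposition ℳ]

theorem decompose_mem_of_homogeneous_mem {P : Type*} [SetLike P M] [AddSubmonoidClass P M]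
    {p : P} {m : M} {β : ι} (hmβ : m ∈ ℳ β) (hmp : m ∈ p) (γ : ι) : (decompose ℳ m γ : M) ∈ p := by
  rcases eq_or_ne β γ with rfl | hne
  · rwa [decompose_of_mem_same ℳ hmβ]
  · rw [decompose_of_mem_ne ℳ hmβ hne]
    exact zero_mem p

theorem isHomogeneous_of_isGradedSubmodule [Mul ι] [Decomposition 𝒜]
    (hsmul : ∀ ⦃α β : ι⦄ ⦃r : R⦄ ⦃m : M⦄, r ∈ 𝒜 α → m ∈ ℳ β → r • m ∈ ℳ (α * β))
    {N : Submodule R M} (hN : IsGradedSubmodule ℳ N) : SetLike.IsHomogeneous ℳ N := by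
  classical
  suffices ∀ y ∈ Submodule.span R {m : M | m ∈ N ∧ ∃ α, m ∈ ℳ α},
      ∀ γ, (decompose ℳ y γ : M) ∈ N from
    fun γ x hx => this x (hN x hx) γ
  intro y hy
  induction hy using Submodule.span_induction with
  | mem m hm =>
    obtain ⟨hmN, β, hmβ⟩ := hm
    exact decompose_mem_of_homogeneous_mem hmβ hmN
  | zero => simp
  | add y z _ _ hy hz => intro γ; simpa using N.add_mem (hy γ) (hz γ)
  | smul r y _ hy =>
    intro γ
    have hsplit : r • y = ∑ β ∈ (decompose ℳ y).support, ∑ α ∈ (decompose 𝒜 r).support,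
        (decompose 𝒜 r α : R) • (decompose ℳ y β : M) := by
      conv_lhs => rw [← sum_support_decompose 𝒜 r, ← sum_support_decompose ℳ y]
      simp only [Finset.sum_smul, Finset.smul_sum]
    rw [hsplit, decompose_sum, DirectSum.sum_apply, AddSubmonoidClass.coe_finsetSum]
    refine sum_mem fun β _ => ?_
    rw [decompose_sum, DirectSum.sum_apply, AddSubmonoidClass.coe_finsetSum]
    exact sum_mem fun α _ => decompose_mem_of_homogeneous_mem
      (hsmul (decompose 𝒜 r α).2 (decompose ℳ y β).2) (N.smul_mem _ (hy β)) γ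

theorem isGradedSubmodule_of_isHomogeneous {N : Submodule R M}
    (hN : SetLike.IsHomogeneous ℳ N) : IsGradedSubmodule ℳ N := by
  classical
  intro x hx
  rw [← sum_support_decompose ℳ x]
  exact sum_mem fun γ _ => Submodule.subset_span ⟨hN γ hx, γ, (decompose ℳ x γ).2⟩

end Homogeneous

section Graded

variable {G R M : Type*} [CommRing R] [AddCommGroup M] [Module R M] {ℳ : G → AddSubgroup M}

theorem IsGradedSubmodule.inf [Group G] [DecidableEq G] {𝒜 : G → AddSubgroup R}
    (h𝒜 : DirectSum.IsInternal 𝒜) (hℳ : IsModuleGrading 𝒜 ℳ) {N₁ N₂ : Submodule R M}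
    (hN₁ : IsGradedSubmodule ℳ N₁) (hN₂ : IsGradedSubmodule ℳ N₂) :
    IsGradedSubmodule ℳ (N₁ ⊓ N₂) := by
  let := h𝒜.chooseDecomposition
  let := hℳ.isInternal.chooseDecomposition
  have h₁ := isHomogeneous_of_isGradedSubmodule hℳ.smul_mem hN₁
  have h₂ := isHomogeneous_of_isGradedSubmodule hℳ.smul_mem hN₂
  exact isGradedSubmodule_of_isHomogeneous fun γ _ hm => ⟨h₁ γ hm.1, h₂ γ hm.2⟩

theorem isGradedSubmodule_sSup {S : Set (Submodule R M)}
    (hS : ∀ D ∈ S, IsGradedSubmodule ℳ D) : IsGradedSubmodule ℳ (sSup S) := by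
  have : sSup S ≤ Submodule.span R {m : M | m ∈ sSup S ∧ ∃ α, m ∈ ℳ α} :=
    sSup_le fun D hD x hx => by
      refine Submodule.span_mono ?_ (hS D hD x hx)
      exact fun m hm => ⟨le_sSup hD hm.1, hm.2⟩
  exact fun n hn => this hn

theorem exists_maximal_isGradedSubmodule_notMem {N : Submodule R M}
    (hN : IsGradedSubmodule ℳ N) {x : M} (hx : x ∉ N) :
    ∃ U, N ≤ U ∧ Maximal (fun D : Submodule R M => IsGradedSubmodule ℳ D ∧ x ∉ D) U := by
  refine zorn_le_nonempty₀ _ (fun c hc hchain y hy => ?_) N ⟨hN, hx⟩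
  refine ⟨sSup c, ⟨isGradedSubmodule_sSup fun D hD => (hc hD).1, fun hxc => ?_⟩,
    fun _ => le_sSup⟩
  obtain ⟨D, hD, hxD⟩ := (Submodule.mem_sSup_of_directed ⟨y, hy⟩ hchain.directedOn).1 hxc
  exact (hc hD).2 hxD

theorem completelyGradedIrreducible_of_maximal {U : Submodule R M} {x : M}
    (hU : Maximal (fun D : Submodule R M => IsGradedSubmodule ℳ D ∧ x ∉ D) U) :
    CompletelyGradedIrreducible ℳ U := by
  refine ⟨hU.1.1, fun htop => hU.1.2 (htop ▸ Submodule.mem_top), fun S hS hUS => ?_⟩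
  by_contra hUS'
  -- every member of `S` strictly contains `U`, so by maximality it contains `x`
  have hxS : x ∈ sInf S := Submodule.mem_sInf.2 fun E hE => by
    have hUE : U ≤ E := hUS ▸ sInf_le hE
    by_contra hxE
    exact hUS' (le_antisymm hUE (hU.2 ⟨hS E hE, hxE⟩ hUE) ▸ hE)
  exact hU.1.2 (hUS ▸ hxS)

theorem exists_completelyGradedIrreducible_of_not_le {N K : Submodule R M}
    (hN : IsGradedSubmodule ℳ N) (hK : ¬K ≤ N) :
    ∃ U, CompletelyGradedIrreducible ℳ U ∧ N ≤ U ∧ ¬K ≤ U := by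
  obtain ⟨x, hxK, hxN⟩ := SetLike.not_le_iff_exists.1 hK
  obtain ⟨U, hNU, hU⟩ := exists_maximal_isGradedSubmodule_notMem hN hxN
  exact ⟨U, completelyGradedIrreducible_of_maximal hU, hNU, fun hKU => hU.1.2 (hKU hxK)⟩

end Graded

theorem stmt8 {G : Type*} [Group G] [DecidableEq G] {R : Type*} [CommRing R]
    {M : Type*} [AddCommGroup M] [Module R M]
    (𝒜 : G → AddSubgroup R) (ℳ : G → AddSubgroup M)
    (h𝒜 : IsRingGrading 𝒜) (hℳ : IsModuleGrading 𝒜 ℳ)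
    (C : Submodule R M) (hC0 : C ≠ ⊥) (hCgr : IsGradedSubmodule ℳ C) :
    IsGrStronglyClassical2AbsorbingSecond 𝒜 ℳ C ↔
      ∀ r s t : R, (∃ α, r ∈ 𝒜 α) → (∃ β, s ∈ 𝒜 β) → (∃ γ, t ∈ 𝒜 γ) →
        ∀ N : Submodule R M, IsGradedSubmodule ℳ N → r • s • t • C ≤ N →
          (r • s • C ≤ N ∨ s • t • C ≤ N ∨ r • t • C ≤ N) := by
  constructor
  · rintro ⟨-, -, habsorb⟩ r s t hr hs ht N hN hle
    by_contra! hnot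
    obtain ⟨U₁, hU₁, hNU₁, hrs⟩ := exists_completelyGradedIrreducible_of_not_le hN hnot.1
    obtain ⟨U₂, hU₂, hNU₂, hst⟩ := exists_completelyGradedIrreducible_of_not_le hN hnot.2.1
    obtain ⟨U₃, hU₃, hNU₃, hrt⟩ := exists_completelyGradedIrreducible_of_not_le hN hnot.2.2
    rcases habsorb r s t hr hs ht U₁ U₂ U₃ hU₁ hU₂ hU₃
        (le_inf (le_inf (hle.trans hNU₁) (hle.trans hNU₂)) (hle.trans hNU₃)) with h | h | h
    · exact hrs (h.trans (inf_le_left.trans inf_le_left))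
    · exact hst (h.trans (inf_le_left.trans inf_le_right))
    · exact hrt (h.trans inf_le_right)
  · refine fun H => ⟨hC0, hCgr, fun r s t hr hs ht U₁ U₂ U₃ hU₁ hU₂ hU₃ hle => ?_⟩
    have hU : IsGradedSubmodule ℳ (U₁ ⊓ U₂ ⊓ U₃) :=
      (hU₁.1.inf h𝒜.isInternal hℳ hU₂.1).inf h𝒜.isInternal hℳ hU₃.1
    exact H r s t hr hs ht _ hU hle
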